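/- arXiv:1604.05543 — 2 statements merged into one kernel-verified Lean document; each statement's English description precedes it below -/
import Mathlib

section
/- Let ρ = v_0 v_1 v_2 ... be a play in an arena with n vertices that is consistent with a positional strategy σ for Player 0, and suppose every request in ρ is eventually answered with finite cost. If between some request and its answer the play traverses a cycle of positive cost, then there is another play consistent with σ in which that request incurs unbounded cost. Consequently, any positional winning strategy in a parity game with costs (costs in {0,1}) realizes the uniform bound n: Cst(σ) ≤ n. -/
/-- An arena: a finite directed graph with a partition of the vertices between the two
players and an initial vertex; every vertex is non-terminal. -/
structure CArena (V : Type*) where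
  inP0 : V → Prop
  edge : V → V → Prop
  init : V
  nonterminal : ∀ v, ∃ w, edge v w

/-- A play: an infinite path through the arena starting at the initial vertex. -/
def IsPlay {V : Type*} (A : CArena V) (ρ : ℕ → V) : Prop :=
  ρ 0 = A.init ∧ ∀ j, A.edge (ρ j) (ρ (j + 1))

/-- Cost of the infix of `ρ` from position `j` to position `j'`. -/
def infixCost {V : Type*} (cst : V → V → ℕ) (ρ : ℕ → V) (j j' : ℕ) : ℕ :=
  ∑ i ∈ Finset.Ico j j', cst (ρ i) (ρ (i + 1))

/-- Position `j'` answers the request at position `j`: it is not earlier, has even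
color, and its color is at least the color requested at `j`. -/
def Answers {V : Type*} (Ω : V → ℕ) (ρ : ℕ → V) (j j' : ℕ) : Prop :=
  j ≤ j' ∧ Even (Ω (ρ j')) ∧ Ω (ρ j) ≤ Ω (ρ j')

/-- The cost-of-response `Cor(ρ, j)`: the minimal cost of an infix from `j` to an
answering position (`⊤` if the request is never answered). -/
noncomputable def Cor {V : Type*} (Ω : V → ℕ) (cst : V → V → ℕ) (ρ : ℕ → V) (j : ℕ) :
    ℕ∞ :=
  sInf {x : ℕ∞ | ∃ j', Answers Ω ρ j j' ∧ x = (infixCost cst ρ j j' : ℕ∞)}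

/-- The cost of a play: `Cst(ρ) = limsup_j Cor(ρ, j)`. -/
noncomputable def playCost {V : Type*} (Ω : V → ℕ) (cst : V → V → ℕ) (ρ : ℕ → V) :
    ℕ∞ :=
  Filter.limsup (fun j => Cor Ω cst ρ j) Filter.atTop

section Pump1

variable {V : Type*} (A : CArena V) (Ω : V → ℕ) (cst : V → V → ℕ) (σ : V → V)

/-- the reparametrization for the single infinite pump -/
def gOne (i₁ i₂ t : ℕ) : ℕ := if t ≤ i₁ then t else i₁ + (t - i₁) % (i₂ - i₁)

lemma gOne_step {ρ : ℕ → V} {i₁ i₂ : ℕ} (h12 : i₁ < i₂) (hv : ρ i₁ = ρ i₂) (t : ℕ) :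
    ρ (gOne i₁ i₂ (t + 1)) = ρ (gOne i₁ i₂ t + 1) := by
  have hL : 0 < i₂ - i₁ := by omega
  rcases le_or_gt (t+1) i₁ with h | h
  · simp [gOne, h, Nat.le_of_succ_le h]
  · have h1 : gOne i₁ i₂ (t+1) = i₁ + (t + 1 - i₁) % (i₂ - i₁) := if_neg (by omega)
    rcases le_or_gt t i₁ with h' | h'
    · have ht : t = i₁ := by omega
      have h2 : gOne i₁ i₂ t = t := if_pos h'
      rw [h1, h2, ht]
      have e1 : i₁ + 1 - i₁ = 1 := by omega
      rw [e1]
      rcases Nat.lt_or_ge 1 (i₂ - i₁) with h2' | h2'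
      · rw [Nat.mod_eq_of_lt h2']
      · have e2 : i₂ - i₁ = 1 := by omega
        rw [e2, Nat.mod_self]
        rw [Nat.add_zero, hv, show i₂ = i₁ + 1 from by omega]
    · have h2 : gOne i₁ i₂ t = i₁ + (t - i₁) % (i₂ - i₁) := if_neg (by omega)
      rw [h1, h2]
      set L := i₂ - i₁ with hLdef
      set d := t - i₁ with hd
      have hdt : t + 1 - i₁ = d + 1 := by omega
      rw [hdt]
      have hmod : d % L < L := Nat.mod_lt _ hL
      rcases Nat.lt_or_ge (d % L + 1) L with hc | hc
      · have : (d + 1) % L = d % L + 1 := by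
          conv_lhs => rw [← Nat.mod_add_div d L]
          rw [Nat.add_right_comm, Nat.add_mul_mod_self_left, Nat.mod_eq_of_lt hc]
        rw [this, ← Nat.add_assoc]
      · have he : d % L + 1 = L := by omega
        have hz : (d + 1) % L = 0 := by
          conv_lhs => rw [← Nat.mod_add_div d L]
          rw [Nat.add_right_comm, Nat.add_mul_mod_self_left, he, Nat.mod_self]
        rw [hz, Nat.add_zero, hv, show i₂ = i₁ + d % L + 1 from by omega]

lemma pump_one (ρ : ℕ → V) (j j' i₁ i₂ : ℕ) (hplay : IsPlay A ρ)
    (hcons : ∀ l, A.inP0 (ρ l) → ρ (l + 1) = σ (ρ l))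
    (hna : ∀ l, j ≤ l → l < j' → ¬ Answers Ω ρ j l)
    (hji : j ≤ i₁) (h12 : i₁ < i₂) (h2j : i₂ ≤ j') (hv : ρ i₁ = ρ i₂) :
    ∃ ρ' : ℕ → V, IsPlay A ρ' ∧ (∀ l, A.inP0 (ρ' l) → ρ' (l + 1) = σ (ρ' l)) ∧
      (∀ l, l ≤ i₁ → ρ' l = ρ l) ∧ Cor Ω cst ρ' j = ⊤ := by
  refine ⟨fun t => ρ (gOne i₁ i₂ t), ?_, ?_, ?_, ?_⟩
  · constructor
    · simp [gOne, hplay.1]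
    · intro t
      show A.edge (ρ (gOne i₁ i₂ t)) (ρ (gOne i₁ i₂ (t + 1)))
      rw [gOne_step h12 hv t]
      exact hplay.2 (gOne i₁ i₂ t)
  · intro l h0
    show ρ (gOne i₁ i₂ (l + 1)) = σ (ρ (gOne i₁ i₂ l))
    rw [gOne_step h12 hv l]
    exact hcons (gOne i₁ i₂ l) h0
  · intro l hl; simp [gOne, hl]
  · have hrange : ∀ t, j ≤ t → j ≤ gOne i₁ i₂ t ∧ gOne i₁ i₂ t < j' := by
      intro t ht
      unfold gOne
      split
      · omega
      · have := Nat.mod_lt (t - i₁) (show 0 < i₂ - i₁ by omega)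
        omega
    have hempty : {x : ℕ∞ | ∃ t', Answers Ω (fun t => ρ (gOne i₁ i₂ t)) j t' ∧
        x = (infixCost cst (fun t => ρ (gOne i₁ i₂ t)) j t' : ℕ∞)} = ∅ := by
      refine Set.eq_empty_iff_forall_notMem.2 ?_
      rintro x ⟨t', ⟨ht1, ht2, ht3⟩, -⟩
      obtain ⟨hg1, hg2⟩ := hrange t' ht1
      have hjj : gOne i₁ i₂ j = j := by simp [gOne, hji]
      refine hna (gOne i₁ i₂ t') hg1 hg2 ⟨hg1, ht2, ?_⟩
      simpa [hjj] using ht3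
    rw [Cor, hempty, sInf_empty]

end Pump1

section MultiPump

variable (aa bb : ℕ → ℕ)

/-- cycle length of window `k` -/
def Lf (k : ℕ) : ℕ := bb k - aa k

/-- accumulated extra time from pumping windows `< k` (window `i` pumped `i` extra times) -/
def Of : ℕ → ℕ
  | 0 => 0
  | k+1 => Of k + k * Lf aa bb k

/-- arrival time at `aa k` in the pumped play -/
def tA (k : ℕ) : ℕ := aa k + Of aa bb k

/-- the time reparametrization of the pumped play -/
noncomputable def gM (t : ℕ) : ℕ :=
  if tA aa bb 0 ≤ t then
    (fun k => if t < tA aa bb k + (k+1) * Lf aa bb k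
      then aa k + (t - tA aa bb k) % Lf aa bb k
      else t - Of aa bb (k+1)) (Nat.findGreatest (fun k => tA aa bb k ≤ t) t)
  else t

variable {aa bb} {jj ee : ℕ → ℕ}
  (h1 : ∀ k, jj k ≤ aa k) (h2 : ∀ k, aa k < bb k)
  (h3 : ∀ k, bb k ≤ ee k) (h4 : ∀ k, ee k < jj (k+1))

section Basic
set_option linter.unusedSectionVars false
include h1 h2 h3 h4

lemma jj_strict : StrictMono jj :=
  strictMono_nat_of_lt_succ fun k =>
    lt_of_le_of_lt (le_trans (h1 k) (le_trans (h2 k).le (h3 k))) (h4 k)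

lemma jj_ge (k : ℕ) : k ≤ jj k := (jj_strict h1 h2 h3 h4).le_apply

lemma aa_lt_succ (k : ℕ) : bb k < aa (k+1) :=
  lt_of_le_of_lt (h3 k) (lt_of_lt_of_le (h4 k) (h1 (k+1)))

lemma tA_lt_succ (k : ℕ) : tA aa bb k < tA aa bb (k+1) := by
  have h := aa_lt_succ h1 h2 h3 h4 k
  have h' := h2 k
  simp only [tA, Of, Lf] at *
  omega

lemma tA_mono : StrictMono (tA aa bb) := strictMono_nat_of_lt_succ (tA_lt_succ h1 h2 h3 h4)

lemma tA_ge (k : ℕ) : k ≤ tA aa bb k :=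
  le_trans (jj_ge h1 h2 h3 h4 k) (le_trans (h1 k) (Nat.le_add_right _ _))

lemma findGreatest_region {k t : ℕ} (hk1 : tA aa bb k ≤ t) (hk2 : t < tA aa bb (k+1)) :
    Nat.findGreatest (fun k => tA aa bb k ≤ t) t = k := by
  rw [Nat.findGreatest_eq_iff]
  refine ⟨le_trans (tA_ge h1 h2 h3 h4 k) hk1, fun _ => hk1, ?_⟩
  intro m hm hmt hP
  have : tA aa bb (k+1) ≤ tA aa bb m := (tA_mono h1 h2 h3 h4).monotone hm
  omega

lemma region_exists {t : ℕ} (ht : tA aa bb 0 ≤ t) :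
    ∃ k, tA aa bb k ≤ t ∧ t < tA aa bb (k+1) := by
  set k := Nat.findGreatest (fun k => tA aa bb k ≤ t) t with hk
  have hspec : tA aa bb k ≤ t :=
    Nat.findGreatest_spec (P := fun k => tA aa bb k ≤ t) (Nat.zero_le t) ht
  refine ⟨k, hspec, ?_⟩
  by_contra hcon
  push_neg at hcon
  exact Nat.findGreatest_is_greatest (Nat.lt_succ_self k)
    (le_trans (tA_ge h1 h2 h3 h4 (k+1)) hcon) hcon

lemma g_eq_low {t : ℕ} (ht : t < tA aa bb 0) : gM aa bb t = t := by
  rw [gM, if_neg (by omega)]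

lemma g_eq_phase1 {k t : ℕ} (hk1 : tA aa bb k ≤ t) (hk2 : t < tA aa bb (k+1))
    (hph : t < tA aa bb k + (k+1) * Lf aa bb k) :
    gM aa bb t = aa k + (t - tA aa bb k) % Lf aa bb k := by
  rw [gM, if_pos (le_trans ((tA_mono h1 h2 h3 h4).monotone (Nat.zero_le k)) hk1),
    findGreatest_region h1 h2 h3 h4 hk1 hk2]
  simp only [if_pos hph]

lemma g_eq_phase2 {k t : ℕ} (hk1 : tA aa bb k ≤ t) (hk2 : t < tA aa bb (k+1))
    (hph : tA aa bb k + (k+1) * Lf aa bb k ≤ t) :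
    gM aa bb t = t - Of aa bb (k+1) := by
  rw [gM, if_pos (le_trans ((tA_mono h1 h2 h3 h4).monotone (Nat.zero_le k)) hk1),
    findGreatest_region h1 h2 h3 h4 hk1 hk2]
  simp only [if_neg (not_lt.2 hph)]

lemma phase2_start (k : ℕ) :
    tA aa bb k + (k+1) * Lf aa bb k = bb k + Of aa bb (k+1) := by
  have := h2 k
  simp only [tA, Of, Lf]
  ring_nf
  omega

lemma phase2_lt_next (k : ℕ) :
    tA aa bb k + (k+1) * Lf aa bb k < tA aa bb (k+1) := by
  rw [phase2_start h1 h2 h3 h4]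
  have := aa_lt_succ h1 h2 h3 h4 k
  simp only [tA]
  omega

lemma L_pos (k : ℕ) : 0 < Lf aa bb k := by
  have := h2 k; simp only [Lf]; omega

lemma g_succ {V : Type*} {ρ : ℕ → V} (h5 : ∀ k, ρ (aa k) = ρ (bb k)) (t : ℕ) :
    ρ (gM aa bb (t + 1)) = ρ (gM aa bb t + 1) := by
  by_cases h0 : t + 1 < tA aa bb 0
  · rw [g_eq_low h1 h2 h3 h4 (show t + 1 < tA aa bb 0 from h0),
      g_eq_low h1 h2 h3 h4 (show t < tA aa bb 0 by omega)]
  · by_cases htl : t < tA aa bb 0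
    · have heq : t + 1 = tA aa bb 0 := by omega
      have hL0 : 0 < Lf aa bb 0 := L_pos h1 h2 h3 h4 0
      rw [g_eq_low h1 h2 h3 h4 htl, g_eq_phase1 h1 h2 h3 h4 (le_of_eq heq.symm)
        (by rw [heq]; exact tA_lt_succ h1 h2 h3 h4 0) (by omega)]
      have e0 : t + 1 - tA aa bb 0 = 0 := by omega
      have haa : t + 1 = aa 0 := by simp only [tA, Of] at heq; omega
      rw [e0, Nat.zero_mod, Nat.add_zero, haa]
    · obtain ⟨k, hk1, hk2⟩ := region_exists h1 h2 h3 h4 (not_lt.1 htl)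
      have hL : 0 < Lf aa bb k := L_pos h1 h2 h3 h4 k
      have hPs := phase2_start h1 h2 h3 h4 k
      by_cases hph : t < tA aa bb k + (k+1) * Lf aa bb k
      · rw [g_eq_phase1 h1 h2 h3 h4 hk1 hk2 hph]
        by_cases hph' : t + 1 < tA aa bb k + (k+1) * Lf aa bb k
        · have hk2' : t + 1 < tA aa bb (k+1) :=
            lt_of_lt_of_le hph' (phase2_lt_next h1 h2 h3 h4 k).le
          rw [g_eq_phase1 h1 h2 h3 h4 (k := k) (by omega) hk2' hph']
          set L := Lf aa bb k with hLdef
          set d := t - tA aa bb k with hd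
          have hdt : t + 1 - tA aa bb k = d + 1 := by omega
          rw [hdt]
          have hmod : d % L < L := Nat.mod_lt _ hL
          rcases Nat.lt_or_ge (d % L + 1) L with hc | hc
          · have : (d + 1) % L = d % L + 1 := by
              conv_lhs => rw [← Nat.mod_add_div d L]
              rw [Nat.add_right_comm, Nat.add_mul_mod_self_left, Nat.mod_eq_of_lt hc]
            rw [this, ← Nat.add_assoc]
          · have he : d % L + 1 = L := by omega
            have hz : (d + 1) % L = 0 := by
              conv_lhs => rw [← Nat.mod_add_div d L]
              rw [Nat.add_right_comm, Nat.add_mul_mod_self_left, he, Nat.mod_self]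
            have hbk : aa k + d % L + 1 = bb k := by
              have := h2 k; simp only [hLdef, Lf] at he ⊢; omega
            rw [hz, Nat.add_zero, h5 k, hbk]
        · have ht1 : t + 1 = tA aa bb k + (k+1) * Lf aa bb k := by omega
          rw [g_eq_phase2 h1 h2 h3 h4 (k := k) (by omega)
            (by rw [ht1]; exact phase2_lt_next h1 h2 h3 h4 k) (by omega)]
          have hd : t - tA aa bb k = (k+1) * Lf aa bb k - 1 := by omega
          have hmul : (k+1) * Lf aa bb k = Lf aa bb k - 1 + Lf aa bb k * k + 1 := by
            have e : (k+1) * Lf aa bb k = Lf aa bb k * k + Lf aa bb k := by ring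
            omega
          have hmod : ((k+1) * Lf aa bb k - 1) % Lf aa bb k = Lf aa bb k - 1 := by
            have e : (k+1) * Lf aa bb k - 1 = Lf aa bb k - 1 + Lf aa bb k * k := by omega
            rw [e, Nat.add_mul_mod_self_left, Nat.mod_eq_of_lt (by omega)]
          have e1 : t + 1 - Of aa bb (k+1) = bb k := by omega
          have e2 : aa k + (Lf aa bb k - 1) + 1 = bb k := by
            have := h2 k; simp only [Lf]; omega
          rw [hd, hmod, e1, e2]
      · rw [g_eq_phase2 h1 h2 h3 h4 hk1 hk2 (not_lt.1 hph)]
        have hOle : Of aa bb (k+1) ≤ t := by omega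
        by_cases hnext : t + 1 < tA aa bb (k+1)
        · rw [g_eq_phase2 h1 h2 h3 h4 (k := k) (by omega) hnext (by omega)]
          have e : t + 1 - Of aa bb (k+1) = t - Of aa bb (k+1) + 1 := by omega
          rw [e]
        · have ht1 : t + 1 = tA aa bb (k+1) := by omega
          have hL' : 0 < Lf aa bb (k+1) := L_pos h1 h2 h3 h4 (k+1)
          have hpos : 0 < (k+1+1) * Lf aa bb (k+1) := Nat.mul_pos (by omega) hL'
          rw [g_eq_phase1 h1 h2 h3 h4 (k := k+1) (le_of_eq ht1.symm)
            (by rw [ht1]; exact tA_lt_succ h1 h2 h3 h4 (k+1)) (by omega)]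
          have e0 : t + 1 - tA aa bb (k+1) = 0 := by omega
          have hOf : Of aa bb (k+1) = Of aa bb k + k * Lf aa bb k := rfl
          have htAk : tA aa bb (k+1) = aa (k+1) + Of aa bb (k+1) := rfl
          have e1 : t - Of aa bb (k+1) + 1 = aa (k+1) := by omega
          rw [e0, Nat.zero_mod, Nat.add_zero, e1]

lemma g_zero : gM aa bb 0 = 0 := by
  rcases Nat.eq_zero_or_pos (tA aa bb 0) with h | h
  · have hL : 0 < Lf aa bb 0 := L_pos h1 h2 h3 h4 0
    have hpos : 0 < (0+1) * Lf aa bb 0 := by omega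
    rw [g_eq_phase1 h1 h2 h3 h4 (k := 0) (by omega)
      (by have := tA_lt_succ h1 h2 h3 h4 0; omega) (by omega)]
    have htA0 : tA aa bb 0 = aa 0 + Of aa bb 0 := rfl
    have h0 : Of aa bb 0 = 0 := rfl
    rw [Nat.zero_sub, Nat.zero_mod]
    omega
  · exact g_eq_low h1 h2 h3 h4 h

lemma g_between (k m : ℕ) (hm1 : jj k ≤ m) (hm2 : m ≤ aa k) :
    gM aa bb (m + Of aa bb k) = m := by
  have hL : 0 < Lf aa bb k := L_pos h1 h2 h3 h4 k
  have htAk : tA aa bb k = aa k + Of aa bb k := rfl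
  by_cases hma : m = aa k
  · subst hma
    have hpos : 0 < (k+1) * Lf aa bb k := Nat.mul_pos (by omega) hL
    rw [g_eq_phase1 h1 h2 h3 h4 (k := k) (by omega)
      (by have := tA_lt_succ h1 h2 h3 h4 k; omega) (by omega),
      show aa k + Of aa bb k - tA aa bb k = 0 from by omega, Nat.zero_mod]
    omega
  · have hma' : m < aa k := by omega
    cases k with
    | zero =>
      have h0 : Of aa bb 0 = 0 := rfl
      rw [g_eq_low h1 h2 h3 h4 (by omega)]
      omega
    | succ k' =>
      have hOf : Of aa bb (k'+1) = Of aa bb k' + k' * Lf aa bb k' := rfl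
      have htAk' : tA aa bb k' = aa k' + Of aa bb k' := rfl
      have hml : (k'+1) * Lf aa bb k' = k' * Lf aa bb k' + Lf aa bb k' := by ring
      have hLf : aa k' + Lf aa bb k' = bb k' := by
        have := h2 k'; simp only [Lf]; omega
      have hbe : bb k' ≤ ee k' := h3 k'
      have hej : ee k' < jj (k'+1) := h4 k'
      rw [g_eq_phase2 h1 h2 h3 h4 (k := k') (by omega) (by omega) (by omega)]
      omega

lemma g_range (k t : ℕ) (ht1 : jj k + Of aa bb k ≤ t)
    (ht2 : t < ee k + Of aa bb (k+1)) :
    jj k ≤ gM aa bb t ∧ gM aa bb t < ee k := by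
  have hL : 0 < Lf aa bb k := L_pos h1 h2 h3 h4 k
  have htAk : tA aa bb k = aa k + Of aa bb k := rfl
  have htAk1 : tA aa bb (k+1) = aa (k+1) + Of aa bb (k+1) := rfl
  have hOf : Of aa bb (k+1) = Of aa bb k + k * Lf aa bb k := rfl
  have hml : (k+1) * Lf aa bb k = k * Lf aa bb k + Lf aa bb k := by ring
  have hLf : aa k + Lf aa bb k = bb k := by have := h2 k; simp only [Lf]; omega
  have hja : jj k ≤ aa k := h1 k
  have hbe : bb k ≤ ee k := h3 k
  have hej : ee k < jj (k+1) := h4 k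
  have hja1 : jj (k+1) ≤ aa (k+1) := h1 (k+1)
  by_cases hreg : tA aa bb k ≤ t
  · have hk2 : t < tA aa bb (k+1) := by omega
    by_cases hph : t < tA aa bb k + (k+1) * Lf aa bb k
    · rw [g_eq_phase1 h1 h2 h3 h4 hreg hk2 hph]
      have := Nat.mod_lt (t - tA aa bb k) hL
      omega
    · rw [g_eq_phase2 h1 h2 h3 h4 hreg hk2 (by omega)]
      omega
  · cases k with
    | zero =>
      have h0 : Of aa bb 0 = 0 := rfl
      rw [g_eq_low h1 h2 h3 h4 (by omega)]
      simp only [h0] at ht1 htAk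
      omega
    | succ k' =>
      have hOf' : Of aa bb (k'+1) = Of aa bb k' + k' * Lf aa bb k' := rfl
      have htAk' : tA aa bb k' = aa k' + Of aa bb k' := rfl
      have hml' : (k'+1) * Lf aa bb k' = k' * Lf aa bb k' + Lf aa bb k' := by ring
      have hLf' : aa k' + Lf aa bb k' = bb k' := by
        have := h2 k'; simp only [Lf]; omega
      have hbe' : bb k' ≤ ee k' := h3 k'
      have hej' : ee k' < jj (k'+1) := h4 k'
      rw [g_eq_phase2 h1 h2 h3 h4 (k := k') (by omega) (by omega) (by omega)]
      omega

lemma gM_at_loop (k i m : ℕ) (hi : i ≤ k) (hm1 : aa k ≤ m) (hm2 : m < bb k) :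
    gM aa bb (tA aa bb k + i * Lf aa bb k + (m - aa k)) = m := by
  have hL : 0 < Lf aa bb k := L_pos h1 h2 h3 h4 k
  have hml : (k+1) * Lf aa bb k = k * Lf aa bb k + Lf aa bb k := by ring
  have hLf : aa k + Lf aa bb k = bb k := by have := h2 k; simp only [Lf]; omega
  have hmul : i * Lf aa bb k ≤ k * Lf aa bb k := Nat.mul_le_mul_right _ hi
  have hnext := phase2_lt_next h1 h2 h3 h4 k
  rw [g_eq_phase1 h1 h2 h3 h4 (k := k) (by omega) (by omega) (by omega)]
  have e : tA aa bb k + i * Lf aa bb k + (m - aa k) - tA aa bb k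
      = (m - aa k) + Lf aa bb k * i := by
    rw [Nat.mul_comm]; omega
  rw [e, Nat.add_mul_mod_self_left, Nat.mod_eq_of_lt (by omega)]
  omega

lemma exists_cost_edge {V : Type*} {cst : V → V → ℕ} {ρ : ℕ → V}
    (h6 : ∀ k, 1 ≤ infixCost cst ρ (aa k) (bb k)) (k : ℕ) :
    ∃ m, aa k ≤ m ∧ m < bb k ∧ 1 ≤ cst (ρ m) (ρ (m + 1)) := by
  by_contra hcon
  push_neg at hcon
  have : infixCost cst ρ (aa k) (bb k) = 0 := by
    refine Finset.sum_eq_zero ?_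
    intro i hi
    rw [Finset.mem_Ico] at hi
    have := hcon i hi.1 hi.2
    omega
  have := h6 k
  omega

lemma cost_lower {V : Type*} {cst : V → V → ℕ} {ρ : ℕ → V}
    (h5 : ∀ k, ρ (aa k) = ρ (bb k))
    (h6 : ∀ k, 1 ≤ infixCost cst ρ (aa k) (bb k)) (k T : ℕ)
    (hT : ee k + Of aa bb (k+1) ≤ T) :
    k + 1 ≤ infixCost cst (fun t => ρ (gM aa bb t)) (jj k + Of aa bb k) T := by
  obtain ⟨m, hm1, hm2, hc⟩ := exists_cost_edge h1 h2 h3 h4 h6 k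
  have hL : 0 < Lf aa bb k := L_pos h1 h2 h3 h4 k
  have hml : (k+1) * Lf aa bb k = k * Lf aa bb k + Lf aa bb k := by ring
  have hLf : aa k + Lf aa bb k = bb k := by have := h2 k; simp only [Lf]; omega
  have htAk : tA aa bb k = aa k + Of aa bb k := rfl
  have hOf : Of aa bb (k+1) = Of aa bb k + k * Lf aa bb k := rfl
  have hja : jj k ≤ aa k := h1 k
  have hbe : bb k ≤ ee k := h3 k
  set f : ℕ → ℕ := fun i => tA aa bb k + i * Lf aa bb k + (m - aa k) with hf
  have hinj : Set.InjOn f (Finset.range (k+1)) := by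
    intro i _ i' _ hii
    simp only [hf] at hii
    have : i * Lf aa bb k = i' * Lf aa bb k := by omega
    exact Nat.eq_of_mul_eq_mul_right hL this
  have hsub : (Finset.range (k+1)).image f ⊆ Finset.Ico (jj k + Of aa bb k) T := by
    intro t ht
    rw [Finset.mem_image] at ht
    obtain ⟨i, hi, rfl⟩ := ht
    rw [Finset.mem_range] at hi
    have hmul : i * Lf aa bb k ≤ k * Lf aa bb k := Nat.mul_le_mul_right _ (by omega)
    rw [Finset.mem_Ico]
    constructor
    · simp only [hf]; omega
    · simp only [hf]; omega
  have hterm : ∀ t ∈ (Finset.range (k+1)).image f,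
      1 ≤ cst ((fun t => ρ (gM aa bb t)) t) ((fun t => ρ (gM aa bb t)) (t + 1)) := by
    intro t ht
    rw [Finset.mem_image] at ht
    obtain ⟨i, hi, rfl⟩ := ht
    rw [Finset.mem_range] at hi
    have hg : gM aa bb (f i) = m := gM_at_loop h1 h2 h3 h4 k i m (by omega) hm1 hm2
    have hg' : ρ (gM aa bb (f i + 1)) = ρ (gM aa bb (f i) + 1) := g_succ h1 h2 h3 h4 h5 (f i)
    simp only [hg', hg]
    exact hc
  calc k + 1 = ((Finset.range (k+1)).image f).card := by
        rw [Finset.card_image_of_injOn hinj, Finset.card_range]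
    _ ≤ ∑ t ∈ (Finset.range (k+1)).image f,
          cst ((fun t => ρ (gM aa bb t)) t) ((fun t => ρ (gM aa bb t)) (t + 1)) := by
        simpa using Finset.card_nsmul_le_sum _ _ 1 hterm
    _ ≤ infixCost cst (fun t => ρ (gM aa bb t)) (jj k + Of aa bb k) T :=
        Finset.sum_le_sum_of_subset hsub

lemma cor_lower {V : Type*} {Ω : V → ℕ} {cst : V → V → ℕ} {ρ : ℕ → V}
    (h5 : ∀ k, ρ (aa k) = ρ (bb k))
    (h6 : ∀ k, 1 ≤ infixCost cst ρ (aa k) (bb k))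
    (h7 : ∀ k l, jj k ≤ l → l < ee k → ¬ Answers Ω ρ (jj k) l) (k : ℕ) :
    ((k : ℕ∞) + 1) ≤ Cor Ω cst (fun t => ρ (gM aa bb t)) (jj k + Of aa bb k) := by
  apply le_sInf
  rintro x ⟨t', ⟨ha1, ha2, ha3⟩, rfl⟩
  have hjk : gM aa bb (jj k + Of aa bb k) = jj k :=
    g_between h1 h2 h3 h4 k (jj k) le_rfl (h1 k)
  have ht' : ee k + Of aa bb (k+1) ≤ t' := by
    by_contra hcon
    push_neg at hcon
    obtain ⟨hg1, hg2⟩ := g_range h1 h2 h3 h4 k t' ha1 hcon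
    refine h7 k (gM aa bb t') hg1 hg2 ⟨hg1, ha2, ?_⟩
    simpa [hjk] using ha3
  have hcost := cost_lower h1 h2 h3 h4 h5 h6 k t' ht'
  have : ((k + 1 : ℕ) : ℕ∞) ≤
      ((infixCost cst (fun t => ρ (gM aa bb t)) (jj k + Of aa bb k) t' : ℕ) : ℕ∞) :=
    Nat.cast_le.mpr hcost
  simpa using this

end Basic

end MultiPump

section Extra

variable {V : Type*} {Ω : V → ℕ} {cst : V → V → ℕ} {ρ : ℕ → V}

lemma eventually_cor_le (h : playCost Ω cst ρ < ⊤) :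
    ∃ b : ℕ, ∀ᶠ j in Filter.atTop, Cor Ω cst ρ j ≤ (b : ℕ∞) := by
  rw [playCost, Filter.limsup_eq] at h
  obtain ⟨a, ha, hlt⟩ := sInf_lt_iff.1 h
  lift a to ℕ using hlt.ne
  exact ⟨a, ha⟩

lemma frequently_cor_gt {n : ℕ} (h : ¬ playCost Ω cst ρ ≤ (n : ℕ∞)) :
    ∃ᶠ j in Filter.atTop, (n : ℕ∞) < Cor Ω cst ρ j := by
  by_contra hcon
  rw [Filter.not_frequently] at hcon
  refine h (Filter.limsup_le_of_le ?_ ?_)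
  · isBoundedDefault
  · filter_upwards [hcon] with j hj
    exact not_lt.1 hj

lemma exists_window [Fintype V] (hcst : ∀ v w, cst v w ≤ 1) {j b : ℕ}
    (hb : Cor Ω cst ρ j ≤ (b : ℕ∞)) (hn : (Fintype.card V : ℕ∞) < Cor Ω cst ρ j) :
    ∃ a b' e, j ≤ a ∧ a < b' ∧ b' ≤ e ∧ ρ a = ρ b' ∧
      1 ≤ infixCost cst ρ a b' ∧ ∀ l, j ≤ l → l < e → ¬ Answers Ω ρ j l := by
  classical
  have hne : ∃ j', Answers Ω ρ j j' := by
    by_contra hcon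
    push_neg at hcon
    have : {x : ℕ∞ | ∃ j', Answers Ω ρ j j' ∧ x = (infixCost cst ρ j j' : ℕ∞)} = ∅ :=
      Set.eq_empty_iff_forall_notMem.2 (by rintro x ⟨j', hj', -⟩; exact hcon j' hj')
    rw [Cor, this, sInf_empty] at hb
    exact absurd hb (by simp)
  set e := Nat.find hne with he
  have hespec : Answers Ω ρ j e := Nat.find_spec hne
  have hemin : ∀ l, j ≤ l → l < e → ¬ Answers Ω ρ j l := fun l _ hl => Nat.find_min hne hl
  have hcor_le : Cor Ω cst ρ j ≤ (infixCost cst ρ j e : ℕ∞) :=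
    sInf_le ⟨e, hespec, rfl⟩
  have hgt : Fintype.card V < infixCost cst ρ j e := by
    have := lt_of_lt_of_le hn hcor_le
    exact_mod_cast this
  set S := (Finset.Ico j e).filter (fun i => 1 ≤ cst (ρ i) (ρ (i+1))) with hS
  have hcard : Fintype.card V < S.card := by
    have hsplit := Finset.sum_filter_add_sum_filter_not (Finset.Ico j e)
      (fun i => 1 ≤ cst (ρ i) (ρ (i+1))) (fun i => cst (ρ i) (ρ (i+1)))
    have hzero : ∑ i ∈ (Finset.Ico j e).filter
        (fun i => ¬ 1 ≤ cst (ρ i) (ρ (i+1))), cst (ρ i) (ρ (i+1)) = 0 := by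
      refine Finset.sum_eq_zero ?_
      intro i hi
      rw [Finset.mem_filter] at hi
      omega
    have hle : ∑ i ∈ S, cst (ρ i) (ρ (i+1)) ≤ S.card * 1 := by
      simpa using Finset.sum_le_card_nsmul S _ 1
        (fun i _ => hcst (ρ i) (ρ (i+1)))
    have : infixCost cst ρ j e = ∑ i ∈ S, cst (ρ i) (ρ (i+1)) := by
      rw [infixCost, ← hsplit, hzero, Nat.add_zero]
    omega
  obtain ⟨i₁, hi₁, i₂, hi₂, hne', hvv⟩ :=
    Finset.exists_ne_map_eq_of_card_lt_of_maps_to hcard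
      (fun i _ => Finset.mem_univ (ρ i))
  rw [hS, Finset.mem_filter, Finset.mem_Ico] at hi₁ hi₂
  rcases Ne.lt_or_gt hne' with hlt | hlt
  · refine ⟨i₁, i₂, e, hi₁.1.1, hlt, le_of_lt hi₂.1.2, hvv, ?_, hemin⟩
    calc 1 ≤ cst (ρ i₁) (ρ (i₁+1)) := hi₁.2
    _ ≤ infixCost cst ρ i₁ i₂ :=
        Finset.single_le_sum (f := fun i => cst (ρ i) (ρ (i+1)))
          (fun i _ => Nat.zero_le _) (Finset.mem_Ico.2 ⟨le_rfl, hlt⟩)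
  · refine ⟨i₂, i₁, e, hi₂.1.1, hlt, le_of_lt hi₁.1.2, hvv.symm, ?_, hemin⟩
    calc 1 ≤ cst (ρ i₂) (ρ (i₂+1)) := hi₂.2
    _ ≤ infixCost cst ρ i₂ i₁ :=
        Finset.single_le_sum (f := fun i => cst (ρ i) (ρ (i+1)))
          (fun i _ => Nat.zero_le _) (Finset.mem_Ico.2 ⟨le_rfl, hlt⟩)

end Extra


/-- Pumping for positional strategies in parity games with costs (costs in `{0,1}`):
(1) if along a play consistent with a positional strategy `σ` of Player 0 the play
traverses a positive-cost cycle between a request and its first answer, then there is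
another play consistent with `σ` in which that request incurs unbounded (infinite) cost;
(2) consequently, if `σ` is winning (every consistent play has finite cost), then `σ`
realizes the uniform bound `n = |V|`: `Cst(σ) ≤ n`. -/
theorem positional_strategy_pumping_bound {V : Type*} [Fintype V] (A : CArena V)
    (Ω : V → ℕ) (cst : V → V → ℕ) (hcst : ∀ v w, cst v w ≤ 1)
    (σ : V → V) (hσ : ∀ v, A.inP0 v → A.edge v (σ v)) :
    (∀ ρ j j' i₁ i₂, IsPlay A ρ → (∀ l, A.inP0 (ρ l) → ρ (l + 1) = σ (ρ l)) →
      Answers Ω ρ j j' → (∀ l, j ≤ l → l < j' → ¬ Answers Ω ρ j l) →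
      j ≤ i₁ → i₁ < i₂ → i₂ ≤ j' → ρ i₁ = ρ i₂ → 0 < infixCost cst ρ i₁ i₂ →
      ∃ ρ' : ℕ → V, IsPlay A ρ' ∧ (∀ l, A.inP0 (ρ' l) → ρ' (l + 1) = σ (ρ' l)) ∧
        (∀ l, l ≤ i₁ → ρ' l = ρ l) ∧ Cor Ω cst ρ' j = ⊤) ∧
    ((∀ ρ, IsPlay A ρ → (∀ l, A.inP0 (ρ l) → ρ (l + 1) = σ (ρ l)) →
        playCost Ω cst ρ < ⊤) →
      ∀ ρ, IsPlay A ρ → (∀ l, A.inP0 (ρ l) → ρ (l + 1) = σ (ρ l)) →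
        playCost Ω cst ρ ≤ (Fintype.card V : ℕ∞)) := by
  constructor
  · intro ρ j j' i₁ i₂ hplay hcons _hans hna hji h12 h2j hv _hpos
    exact pump_one A Ω cst σ ρ j j' i₁ i₂ hplay hcons hna hji h12 h2j hv
  · intro hwin ρ hplay hcons
    by_contra hcon
    obtain ⟨b, hev⟩ := eventually_cor_le (hwin ρ hplay hcons)
    have hfreq := frequently_cor_gt hcon
    have hpickE : ∀ N : ℕ, ∃ q : ℕ × ℕ × ℕ × ℕ,
        N ≤ q.1 ∧ q.1 ≤ q.2.1 ∧ q.2.1 < q.2.2.1 ∧ q.2.2.1 ≤ q.2.2.2 ∧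
        ρ q.2.1 = ρ q.2.2.1 ∧ 1 ≤ infixCost cst ρ q.2.1 q.2.2.1 ∧
        ∀ l, q.1 ≤ l → l < q.2.2.2 → ¬ Answers Ω ρ q.1 l := by
      intro N
      obtain ⟨j, hjN, hgt, hle⟩ := Filter.frequently_atTop.1 (hfreq.and_eventually hev) N
      obtain ⟨a, b', e, h⟩ := exists_window hcst hle hgt
      exact ⟨(j, a, b', e), hjN, h.1, h.2.1, h.2.2.1, h.2.2.2.1, h.2.2.2.2.1,
        h.2.2.2.2.2⟩
    choose pick hpick1 hpick2 hpick3 hpick4 hpick5 hpick6 hpick7 using hpickE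
    let w : ℕ → ℕ × ℕ × ℕ × ℕ :=
      fun k => Nat.rec (pick 0) (fun _ wk => pick (wk.2.2.2 + 1)) k
    let jj : ℕ → ℕ := fun k => (w k).1
    let aa : ℕ → ℕ := fun k => (w k).2.1
    let bbf : ℕ → ℕ := fun k => (w k).2.2.1
    let ee : ℕ → ℕ := fun k => (w k).2.2.2
    have hWpick : ∀ k, ∃ N, w k = pick N := by
      intro k
      cases k with
      | zero => exact ⟨0, rfl⟩
      | succ k' => exact ⟨(w k').2.2.2 + 1, rfl⟩
    have h1 : ∀ k, jj k ≤ aa k := by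
      intro k; obtain ⟨N, hN⟩ := hWpick k; show (w k).1 ≤ (w k).2.1
      rw [hN]; exact hpick2 N
    have h2 : ∀ k, aa k < bbf k := by
      intro k; obtain ⟨N, hN⟩ := hWpick k; show (w k).2.1 < (w k).2.2.1
      rw [hN]; exact hpick3 N
    have h3 : ∀ k, bbf k ≤ ee k := by
      intro k; obtain ⟨N, hN⟩ := hWpick k; show (w k).2.2.1 ≤ (w k).2.2.2
      rw [hN]; exact hpick4 N
    have h4 : ∀ k, ee k < jj (k+1) := by
      intro k
      show (w k).2.2.2 < (w (k+1)).1
      have : w (k+1) = pick ((w k).2.2.2 + 1) := rfl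
      rw [this]
      have := hpick1 ((w k).2.2.2 + 1)
      omega
    have h5 : ∀ k, ρ (aa k) = ρ (bbf k) := by
      intro k; obtain ⟨N, hN⟩ := hWpick k; show ρ (w k).2.1 = ρ (w k).2.2.1
      rw [hN]; exact hpick5 N
    have h6 : ∀ k, 1 ≤ infixCost cst ρ (aa k) (bbf k) := by
      intro k; obtain ⟨N, hN⟩ := hWpick k
      show 1 ≤ infixCost cst ρ (w k).2.1 (w k).2.2.1
      rw [hN]; exact hpick6 N
    have h7 : ∀ k l, jj k ≤ l → l < ee k → ¬ Answers Ω ρ (jj k) l := by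
      intro k; obtain ⟨N, hN⟩ := hWpick k
      show ∀ l, (w k).1 ≤ l → l < (w k).2.2.2 → ¬ Answers Ω ρ (w k).1 l
      rw [hN]; exact hpick7 N
    have hplay'' : IsPlay A (fun t => ρ (gM aa bbf t)) := by
      constructor
      · show ρ (gM aa bbf 0) = A.init
        rw [g_zero h1 h2 h3 h4]; exact hplay.1
      · intro t
        show A.edge (ρ (gM aa bbf t)) (ρ (gM aa bbf (t+1)))
        rw [g_succ h1 h2 h3 h4 h5 t]
        exact hplay.2 (gM aa bbf t)
    have hcons'' : ∀ l, A.inP0 ((fun t => ρ (gM aa bbf t)) l) →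
        (fun t => ρ (gM aa bbf t)) (l + 1) = σ ((fun t => ρ (gM aa bbf t)) l) := by
      intro l hl
      show ρ (gM aa bbf (l+1)) = σ (ρ (gM aa bbf l))
      rw [g_succ h1 h2 h3 h4 h5 l]
      exact hcons (gM aa bbf l) hl
    obtain ⟨b'', hev''⟩ := eventually_cor_le (hwin _ hplay'' hcons'')
    rw [Filter.eventually_atTop] at hev''
    obtain ⟨N, hN⟩ := hev''
    set k := max N b'' with hk
    have hcor := cor_lower h1 h2 h3 h4 h5 h6 h7 k
    have htk : N ≤ jj k + Of aa bbf k :=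
      le_trans (le_trans (le_max_left _ _) (jj_ge h1 h2 h3 h4 k)) (Nat.le_add_right _ _)
    have hfin : ((k : ℕ∞) + 1) ≤ (b'' : ℕ∞) := le_trans hcor (hN _ htk)
    have : (k : ℕ) + 1 ≤ b'' := by exact_mod_cast hfin
    omega
end

section
/- If in a parity game with integer-valued costs with n vertices and maximal edge cost W Player 0 has a positional winning strategy σ, then Cst(σ) ≤ nW: along any play consistent with σ, every request (after a finite prefix) is answered with cost at most nW. -/
namespace CostBoundAux

/-- The state of the splicing construction: a play together with a stable prefix
bound `M`, a tail start `T` and a tail source `S`. -/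
abbrev St (V : Type*) := (ℕ → V) × ℕ × ℕ × ℕ

def StInv {V : Type*} (A : CArena V) (σ : V → V) (ρ : ℕ → V) (i : ℕ) (q : St V) : Prop :=
  IsPlay A q.1 ∧ (∀ l, A.inP0 (q.1 l) → q.1 (l + 1) = σ (q.1 l)) ∧
    (∀ t, q.1 (q.2.2.1 + t) = ρ (q.2.2.2 + t)) ∧ i ≤ q.2.1

def GProp {V : Type*} (Ω : V → ℕ) (cst : V → V → ℕ) (i : ℕ) (q : St V) : Prop :=
  ∃ a e, i ≤ a ∧ a ≤ e ∧ e ≤ q.2.1 ∧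
    (∀ t, a ≤ t → t < e → ¬ (Even (Ω (q.1 t)) ∧ Ω (q.1 a) ≤ Ω (q.1 t))) ∧
    i ≤ infixCost cst q.1 a e

def StepRel {V : Type*} (A : CArena V) (Ω : V → ℕ) (cst : V → V → ℕ) (σ : V → V)
    (ρ : ℕ → V) (i : ℕ) (q q' : St V) : Prop :=
  (∀ t, t ≤ q.2.1 → q'.1 t = q.1 t) ∧ q.2.1 < q'.2.1 ∧ StInv A σ ρ (i + 1) q' ∧
    GProp Ω cst (i + 1) q'

/-- Cycle extraction: if the request at `j` has finite cost-of-response larger than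
`n·W`, then before its first answer there is a repeated vertex with a positive-cost
outgoing edge, and no position before the first answer answers the request. -/
lemma extract {V : Type*} [Fintype V] (A : CArena V) (Ω : V → ℕ) (cst : V → V → ℕ)
    (W : ℕ) (hW : ∀ v w, A.edge v w → cst v w ≤ W) (ρ : ℕ → V)
    (hplay : ∀ t, A.edge (ρ t) (ρ (t + 1))) (j : ℕ)
    (hbig : ((Fintype.card V * W : ℕ) : ℕ∞) < Cor Ω cst ρ j)
    (hfin : Cor Ω cst ρ j < ⊤) :
    ∃ j' l l', j ≤ l ∧ l < l' ∧ l' < j' ∧ ρ l = ρ l' ∧ 0 < cst (ρ l) (ρ (l + 1)) ∧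
      ∀ t, j ≤ t → t < j' → ¬ (Even (Ω (ρ t)) ∧ Ω (ρ j) ≤ Ω (ρ t)) := by
  classical
  obtain ⟨x, hxS, -⟩ := sInf_lt_iff.mp hfin
  obtain ⟨j₀, hans0, rfl⟩ := hxS
  have hex : ∃ t, Answers Ω ρ j t := ⟨j₀, hans0⟩
  set j' := Nat.find hex with hj'def
  have hans : Answers Ω ρ j j' := Nat.find_spec hex
  have hmin : ∀ t, t < j' → ¬ Answers Ω ρ j t := fun t ht => Nat.find_min hex ht
  have hle : Cor Ω cst ρ j ≤ ((infixCost cst ρ j j' : ℕ) : ℕ∞) :=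
    sInf_le ⟨j', hans, rfl⟩
  have hcost : Fintype.card V * W < infixCost cst ρ j j' := by
    have h := lt_of_lt_of_le hbig hle
    exact_mod_cast h
  set Sf := (Finset.Ico j j').filter (fun t => cst (ρ t) (ρ (t + 1)) ≠ 0) with hSf
  have hsum : ∑ t ∈ Sf, cst (ρ t) (ρ (t + 1)) = infixCost cst ρ j j' :=
    Finset.sum_filter_ne_zero _
  have hsum2 : ∑ t ∈ Sf, cst (ρ t) (ρ (t + 1)) ≤ Sf.card * W := by
    have h := Finset.sum_le_card_nsmul Sf (fun t => cst (ρ t) (ρ (t + 1))) W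
      (fun x _ => hW _ _ (hplay x))
    simpa [smul_eq_mul] using h
  have hcard : Fintype.card V < Sf.card := by
    by_contra hc
    push_neg at hc
    have h2 : Sf.card * W ≤ Fintype.card V * W := Nat.mul_le_mul_right _ hc
    omega
  have hcard2 : (Finset.univ : Finset V).card < Sf.card := by simpa using hcard
  obtain ⟨a, ha, b, hb, hab, heq⟩ := Finset.exists_ne_map_eq_of_card_lt_of_maps_to
    hcard2 (fun a (_ : a ∈ Sf) => Finset.mem_univ (ρ a))
  have hnoans : ∀ t, j ≤ t → t < j' → ¬ (Even (Ω (ρ t)) ∧ Ω (ρ j) ≤ Ω (ρ t)) := by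
    intro t h1 h2 h3
    exact hmin t h2 ⟨h1, h3.1, h3.2⟩
  simp only [hSf, Finset.mem_filter, Finset.mem_Ico] at ha hb
  rcases lt_or_gt_of_ne hab with h | h
  · exact ⟨j', a, b, ha.1.1, h, hb.1.2, heq, Nat.pos_of_ne_zero ha.2, hnoans⟩
  · exact ⟨j', b, a, hb.1.1, h, ha.1.2, heq.symm, Nat.pos_of_ne_zero hb.2, hnoans⟩


section Step

variable {V : Type*} [Fintype V] (A : CArena V) (Ω : V → ℕ) (cst : V → V → ℕ) (W : ℕ)
  (hW : ∀ v w, A.edge v w → cst v w ≤ W) (σ : V → V) (ρ : ℕ → V)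
  (hρ : IsPlay A ρ) (hρc : ∀ l, A.inP0 (ρ l) → ρ (l + 1) = σ (ρ l))
  (N₀ : ℕ) (hN₀ : ∀ j, N₀ ≤ j → Cor Ω cst ρ j < ⊤)
  (H : ∀ N, ∃ j, N ≤ j ∧ ((Fintype.card V * W : ℕ) : ℕ∞) < Cor Ω cst ρ j)

include hW hρ hρc hN₀ H in
lemma step (i : ℕ) (q : St V) (hq : StInv A σ ρ i q) :
    ∃ q', StepRel A Ω cst σ ρ i q q' := by
  classical
  obtain ⟨π, M, T, S⟩ := q
  obtain ⟨hπ, hπc, htail, hM⟩ := hq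
  simp only at hπ hπc htail hM ⊢
  obtain ⟨j, hjB, hbig⟩ := H (max N₀ (S + M + i + 1))
  have hfin := hN₀ j (le_trans (le_max_left _ _) hjB)
  have hjS : S + M + i + 1 ≤ j := le_trans (le_max_right _ _) hjB
  obtain ⟨j', l, l', hjl, hll', hl'j', hveq, hpos, hnoans⟩ :=
    extract A Ω cst W hW ρ hρ.2 j hbig hfin
  set p := l' - l with hpdef
  have hp0 : 0 < p := by omega
  set k := i + 1 with hk
  set L := T + (l - S) with hL
  have hkp0 : 0 < k * p := Nat.mul_pos (by omega) hp0
  set T' := L + k * p with hT'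
  set E := T' + (j' - l') with hE
  set a := T + (j - S) with hadef
  set M' := max E (M + 1) with hM'
  have hSj : S ≤ j := by omega
  have hSl : S ≤ l := by omega
  have haL : a ≤ L := by omega
  have hMa : M + i + 1 ≤ a := by omega
  have hLT' : L < T' := by omega
  have hT'E : T' ≤ E := by omega
  set π' : ℕ → V := fun t =>
    if t < L then π t else if t < T' then ρ (l + (t - L) % p) else ρ (l' + (t - T'))
    with hπ'def
  have hlp : l + p = l' := by omega
  have hval2 : ∀ t, L ≤ t → t < T' → π' t = ρ (l + (t - L) % p) := by
    intro t h1 h2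
    simp only [hπ'def, if_neg (by omega : ¬ t < L), if_pos h2]
  have hval3 : ∀ t, T' ≤ t → π' t = ρ (l' + (t - T')) := by
    intro t h1
    simp only [hπ'def, if_neg (by omega : ¬ t < L), if_neg (by omega : ¬ t < T')]
  have hπLval : π L = ρ l := by
    have h1 := htail (l - S)
    rwa [Nat.add_sub_cancel' hSl] at h1
  have hπle : ∀ t, t ≤ L → π' t = π t := by
    intro t ht
    rcases lt_or_eq_of_le ht with h | heq
    · simp only [hπ'def, if_pos h]
    · rw [heq, hval2 L le_rfl hLT', Nat.sub_self, Nat.zero_mod, Nat.add_zero, hπLval]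
  have hmodsucc : ∀ b : ℕ, (b + 1) % p = (b % p + 1) % p := by
    intro b
    conv_lhs => rw [← Nat.div_add_mod b p]
    rw [Nat.add_assoc, Nat.mul_add_mod]
  have hpair : ∀ t, L ≤ t → t < T' →
      π' t = ρ (l + (t - L) % p) ∧ π' (t + 1) = ρ (l + (t - L) % p + 1) := by
    intro t h1 h2
    refine ⟨hval2 t h1 h2, ?_⟩
    have hr : (t - L) % p < p := Nat.mod_lt _ hp0
    by_cases h3 : t + 1 < T'
    · rw [hval2 (t + 1) (by omega) h3]
      have h4 : t + 1 - L = (t - L) + 1 := by omega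
      rw [h4, hmodsucc]
      rcases Nat.lt_or_ge ((t - L) % p + 1) p with h5 | h5
      · rw [Nat.mod_eq_of_lt h5, ← Nat.add_assoc]
      · have h6 : (t - L) % p + 1 = p := by omega
        rw [h6, Nat.mod_self, Nat.add_zero]
        have h7 : l + (t - L) % p + 1 = l' := by omega
        rw [h7]
        exact hveq
    · have h4 : t + 1 = T' := by omega
      rw [hval3 (t + 1) (by omega), h4, Nat.sub_self, Nat.add_zero]
      have hkpi : k * p = i * p + p := by rw [hk, Nat.succ_mul]
      have h5 : t - L = (p - 1) + i * p := by omega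
      rw [h5, Nat.add_mul_mod_self_right, Nat.mod_eq_of_lt (by omega : p - 1 < p)]
      have h8 : l + (p - 1) + 1 = l' := by omega
      rw [h8]
  have hedge : ∀ t, A.edge (π' t) (π' (t + 1)) ∧
      (A.inP0 (π' t) → π' (t + 1) = σ (π' t)) := by
    intro t
    rcases Nat.lt_or_ge t L with h1 | h1
    · rw [hπle t h1.le, hπle (t + 1) h1]
      exact ⟨hπ.2 t, hπc t⟩
    · rcases Nat.lt_or_ge t T' with h2 | h2
      · obtain ⟨e1, e2⟩ := hpair t h1 h2
        rw [e1, e2]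
        exact ⟨hρ.2 _, hρc _⟩
      · have e1 : π' t = ρ (l' + (t - T')) := hval3 t h2
        have e2 : π' (t + 1) = ρ (l' + (t - T') + 1) := by
          rw [hval3 (t + 1) (by omega)]
          congr 1
          omega
        rw [e1, e2]
        exact ⟨hρ.2 _, hρc _⟩
  have hplay' : IsPlay A π' := by
    constructor
    · rw [hπle 0 (Nat.zero_le _)]
      exact hπ.1
    · exact fun t => (hedge t).1
  have htail' : ∀ u, π' (T' + u) = ρ (l' + u) := by
    intro u
    rw [hval3 (T' + u) (by omega)]
    congr 1
    omega
  have hπ'a : π' a = ρ j := by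
    rw [hπle a haL, hadef]
    have h1 := htail (j - S)
    rwa [Nat.add_sub_cancel' hSj] at h1
  have hsrc : ∀ t, a ≤ t → t < E → ∃ s₀, j ≤ s₀ ∧ s₀ < j' ∧ π' t = ρ s₀ := by
    intro t h1 h2
    rcases Nat.lt_or_ge t L with hc | hc
    · refine ⟨S + (t - T), by omega, by omega, ?_⟩
      rw [hπle t hc.le]
      have h4 := htail (t - T)
      rwa [show T + (t - T) = t by omega] at h4
    · rcases Nat.lt_or_ge t T' with hc2 | hc2
      · refine ⟨l + (t - L) % p, by omega, ?_, (hpair t hc hc2).1⟩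
        have := Nat.mod_lt (t - L) hp0
        omega
      · exact ⟨l' + (t - T'), by omega, by omega, hval3 t hc2⟩
  have hnoans' : ∀ t, a ≤ t → t < E →
      ¬ (Even (Ω (π' t)) ∧ Ω (π' a) ≤ Ω (π' t)) := by
    intro t h1 h2 h3
    obtain ⟨s₀, hs1, hs2, hs3⟩ := hsrc t h1 h2
    rw [hs3] at h3
    rw [hπ'a] at h3
    exact hnoans s₀ hs1 hs2 h3
  have hterm : ∀ m, m < k → π' (L + m * p) = ρ l ∧ π' (L + m * p + 1) = ρ (l + 1) := by
    intro m hm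
    have h2 : L + m * p < T' := by
      have h3 : m * p < k * p := Nat.mul_lt_mul_of_lt_of_le hm le_rfl hp0
      omega
    obtain ⟨e1, e2⟩ := hpair (L + m * p) (Nat.le_add_right _ _) h2
    rw [Nat.add_sub_cancel_left, Nat.mul_mod_left, Nat.add_zero] at e1 e2
    exact ⟨e1, e2⟩
  have hcost : k ≤ infixCost cst π' a E := by
    classical
    set Fk := (Finset.range k).image (fun m => L + m * p) with hFk
    have hFsub : Fk ⊆ Finset.Ico a E := by
      intro x hx
      simp only [hFk, Finset.mem_image, Finset.mem_range] at hx
      obtain ⟨m, hm, rfl⟩ := hx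
      rw [Finset.mem_Ico]
      have h3 : m * p < k * p := Nat.mul_lt_mul_of_lt_of_le hm le_rfl hp0
      omega
    have hinj : Function.Injective (fun m : ℕ => L + m * p) := by
      intro x y hxy
      simp only at hxy
      exact Nat.eq_of_mul_eq_mul_right hp0 (by omega)
    have hcardk : Fk.card = k := by
      rw [hFk, Finset.card_image_of_injective _ hinj, Finset.card_range]
    have h1 : ∀ x ∈ Fk, 1 ≤ cst (π' x) (π' (x + 1)) := by
      intro x hx
      simp only [hFk, Finset.mem_image, Finset.mem_range] at hx
      obtain ⟨m, hm, rfl⟩ := hx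
      obtain ⟨e1, e2⟩ := hterm m hm
      rw [e1, e2]
      exact hpos
    calc k = Fk.card • 1 := by simp [hcardk]
      _ ≤ ∑ x ∈ Fk, cst (π' x) (π' (x + 1)) := Finset.card_nsmul_le_sum _ _ _ h1
      _ ≤ ∑ x ∈ Finset.Ico a E, cst (π' x) (π' (x + 1)) :=
          Finset.sum_le_sum_of_subset hFsub
      _ = infixCost cst π' a E := rfl
  refine ⟨(π', M', T', l'), ?_, ?_, ?_, ?_⟩
  · intro t ht
    simp only at ht ⊢
    exact hπle t (by omega)
  · show M < M'
    simp only [hM']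
    omega
  · refine ⟨hplay', fun t => (hedge t).2, htail', ?_⟩
    show i + 1 ≤ M'
    simp only [hM']
    omega
  · refine ⟨a, E, by omega, by omega, ?_, hnoans', ?_⟩
    · show E ≤ M'
      simp only [hM']
      omega
    · exact hcost

include hρ hρc in
/-- The recursively spliced sequence of plays. -/
noncomputable def seq : (i : ℕ) → {q : St V // StInv A σ ρ i q}
  | 0 => ⟨(ρ, 0, 0, 0), hρ, hρc, fun _ => rfl, Nat.zero_le _⟩
  | i + 1 =>
    ⟨(step A Ω cst W hW σ ρ hρ hρc N₀ hN₀ H i (seq i).1 (seq i).2).choose,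
      (step A Ω cst W hW σ ρ hρ hρc N₀ hN₀ H i (seq i).1 (seq i).2).choose_spec.2.2.1⟩

include hW hρ hρc hN₀ H in
lemma seq_spec (i : ℕ) :
    StepRel A Ω cst σ ρ i (seq A Ω cst W hW σ ρ hρ hρc N₀ hN₀ H i).1
      (seq A Ω cst W hW σ ρ hρ hρc N₀ hN₀ H (i + 1)).1 :=
  (step A Ω cst W hW σ ρ hρ hρc N₀ hN₀ H i
    (seq A Ω cst W hW σ ρ hρ hρc N₀ hN₀ H i).1
    (seq A Ω cst W hW σ ρ hρ hρc N₀ hN₀ H i).2).choose_spec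

include hW hρ hρc hN₀ H in
/-- The limit of the spliced sequence: a consistent play with unbounded
cost-of-response. -/
lemma exists_unbounded_play :
    ∃ τ : ℕ → V, IsPlay A τ ∧ (∀ l, A.inP0 (τ l) → τ (l + 1) = σ (τ l)) ∧
      ∀ n : ℕ, ∃ jp, n ≤ jp ∧ ((n : ℕ∞)) ≤ Cor Ω cst τ jp := by
  classical
  set s : (i : ℕ) → {q : St V // StInv A σ ρ i q} :=
    seq A Ω cst W hW σ ρ hρ hρc N₀ hN₀ H with hs
  set π : ℕ → ℕ → V := fun i => (s i).1.1 with hπ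
  set M : ℕ → ℕ := fun i => (s i).1.2.1 with hMdef
  have hInv : ∀ i, IsPlay A (π i) ∧ (∀ l, A.inP0 (π i l) → π i (l + 1) = σ (π i l)) ∧
      i ≤ M i := fun i => ⟨(s i).2.1, (s i).2.2.1, (s i).2.2.2.2⟩
  have hstep : ∀ i, StepRel A Ω cst σ ρ i (s i).1 (s (i + 1)).1 := by
    intro i
    rw [hs]
    exact seq_spec A Ω cst W hW σ ρ hρ hρc N₀ hN₀ H i
  have hagree : ∀ i t, t ≤ M i → π (i + 1) t = π i t := fun i => (hstep i).1
  have hMlt : ∀ i, M i < M (i + 1) := fun i => (hstep i).2.1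
  have hG : ∀ i, GProp Ω cst (i + 1) (s (i + 1)).1 := fun i => (hstep i).2.2.2
  have hMmono : ∀ i d, M i ≤ M (i + d) := by
    intro i d
    induction d with
    | zero => exact le_rfl
    | succ d ih => exact le_trans ih (le_of_lt (hMlt (i + d)))
  have hchain : ∀ i d t, t ≤ M i → π (i + d) t = π i t := by
    intro i d
    induction d with
    | zero => intro t _; rfl
    | succ d ih =>
      intro t ht
      have h1 : π (i + d + 1) t = π (i + d) t := hagree (i + d) t (le_trans ht (hMmono i d))
      rw [show i + (d + 1) = i + d + 1 from rfl, h1]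
      exact ih t ht
  set τ : ℕ → V := fun t => π t t with hτ
  have hstab : ∀ i t, t ≤ M i → τ t = π i t := by
    intro i t ht
    rcases le_total t i with h | h
    · obtain ⟨d, rfl⟩ := Nat.exists_eq_add_of_le h
      exact (hchain t d t (hInv t).2.2).symm
    · obtain ⟨d, rfl⟩ := Nat.exists_eq_add_of_le h
      exact hchain i d (i + d) ht
  have hτplay : IsPlay A τ := by
    constructor
    · rw [hstab 0 0 (Nat.zero_le _)]
      exact (hInv 0).1.1
    · intro t
      rw [hstab (t + 1) t (by have := (hInv (t + 1)).2.2; omega),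
        hstab (t + 1) (t + 1) (hInv (t + 1)).2.2]
      exact (hInv (t + 1)).1.2 t
  have hτcons : ∀ l, A.inP0 (τ l) → τ (l + 1) = σ (τ l) := by
    intro t
    rw [hstab (t + 1) t (by have := (hInv (t + 1)).2.2; omega),
      hstab (t + 1) (t + 1) (hInv (t + 1)).2.2]
    exact (hInv (t + 1)).2.1 t
  refine ⟨τ, hτplay, hτcons, ?_⟩
  intro n
  obtain ⟨a, e, ha1, hae, heM, hnoans, hcost⟩ := hG n
  have heM' : e ≤ M (n + 1) := heM
  have hv : ∀ t, t ≤ e → τ t = π (n + 1) t := fun t ht =>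
    hstab (n + 1) t (le_trans ht heM')
  have hcost' : infixCost cst τ a e = infixCost cst (π (n + 1)) a e := by
    apply Finset.sum_congr rfl
    intro u hu
    rw [Finset.mem_Ico] at hu
    rw [hv u (by omega), hv (u + 1) (by omega)]
  refine ⟨a, by omega, ?_⟩
  apply le_sInf
  rintro x ⟨t, hansw, rfl⟩
  obtain ⟨hat, heven, hge⟩ := hansw
  rcases Nat.lt_or_ge t e with hlt | hge2
  · exfalso
    apply hnoans t hat hlt
    rw [hv t hlt.le] at heven hge
    rw [hv a hae] at hge
    exact ⟨heven, hge⟩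
  · have h1 : infixCost cst τ a e ≤ infixCost cst τ a t :=
      Finset.sum_le_sum_of_subset (Finset.Ico_subset_Ico le_rfl hge2)
    have h3 : n + 1 ≤ infixCost cst τ a e := by
      rw [hcost']
      exact hcost
    have h2 : n ≤ infixCost cst τ a t := by omega
    exact_mod_cast Nat.cast_le.mpr h2

end Step

end CostBoundAux

/-- In a parity game with integer-valued costs with `n` vertices and maximal edge cost
`W`, a positional winning strategy `σ` of Player 0 satisfies `Cst(σ) ≤ nW`: along any
play consistent with `σ`, every request after a finite prefix is answered with cost at
most `nW`. -/
theorem positional_winning_strategy_cost_bound {V : Type*} [Fintype V] (A : CArena V)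
    (Ω : V → ℕ) (cst : V → V → ℕ) (W : ℕ) (hW : ∀ v w, A.edge v w → cst v w ≤ W)
    (σ : V → V) (hσ : ∀ v, A.inP0 v → A.edge v (σ v))
    (hwin : ∀ ρ, IsPlay A ρ → (∀ l, A.inP0 (ρ l) → ρ (l + 1) = σ (ρ l)) →
      playCost Ω cst ρ < ⊤) :
    ∀ ρ, IsPlay A ρ → (∀ l, A.inP0 (ρ l) → ρ (l + 1) = σ (ρ l)) →
      (∃ N, ∀ j, N ≤ j → Cor Ω cst ρ j ≤ ((Fintype.card V * W : ℕ) : ℕ∞)) ∧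
      playCost Ω cst ρ ≤ ((Fintype.card V * W : ℕ) : ℕ∞) := by
  intro ρ hρ hcons
  have hfin := hwin ρ hρ hcons
  rw [playCost, Filter.limsup_eq] at hfin
  obtain ⟨b, hbS, hbt⟩ := sInf_lt_iff.mp hfin
  rw [Set.mem_setOf_eq, Filter.eventually_atTop] at hbS
  obtain ⟨N₀, hN₀'⟩ := hbS
  have hN₀ : ∀ j, N₀ ≤ j → Cor Ω cst ρ j < ⊤ := fun j hj =>
    lt_of_le_of_lt (hN₀' j hj) hbt
  have key : ∃ N, ∀ j, N ≤ j → Cor Ω cst ρ j ≤ ((Fintype.card V * W : ℕ) : ℕ∞) := by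
    by_contra hcon
    push_neg at hcon
    have H : ∀ N, ∃ j, N ≤ j ∧ ((Fintype.card V * W : ℕ) : ℕ∞) < Cor Ω cst ρ j := by
      intro N
      obtain ⟨j, hj1, hj2⟩ := hcon N
      exact ⟨j, hj1, hj2⟩
    obtain ⟨τ, hτplay, hτcons, hτbad⟩ :=
      CostBoundAux.exists_unbounded_play A Ω cst W hW σ ρ hρ hcons N₀ hN₀ H
    have hbad := hwin τ hτplay hτcons
    rw [playCost, Filter.limsup_eq] at hbad
    obtain ⟨c, hcS, hct⟩ := sInf_lt_iff.mp hbad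
    rw [Set.mem_setOf_eq, Filter.eventually_atTop] at hcS
    obtain ⟨N, hN⟩ := hcS
    lift c to ℕ using hct.ne
    obtain ⟨jp, hjp1, hjp2⟩ := hτbad (max N c + 1)
    have h1 : Cor Ω cst τ jp ≤ (c : ℕ∞) := hN jp (by omega)
    have h2 : ((max N c + 1 : ℕ) : ℕ∞) ≤ (c : ℕ∞) := le_trans hjp2 h1
    have h3 : max N c + 1 ≤ c := by exact_mod_cast h2
    omega
  obtain ⟨N, hN⟩ := key
  refine ⟨⟨N, hN⟩, ?_⟩
  rw [playCost, Filter.limsup_eq]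
  apply sInf_le
  rw [Set.mem_setOf_eq, Filter.eventually_atTop]
  exact ⟨N, hN⟩
end
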